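/- For a convex risk measure R with conjugate R* = Φ on the set {⟨p,1⟩ = 1} (and +∞ elsewhere), the functional R^ε(X) = inf_{λ>0}(λε + λR(X/λ)) has Fenchel conjugate (R^ε)*(p) = sup_{λ > 0} λ(R*(p) − ε); hence (R^ε)*(p) = 0 if R*(p) ≤ ε and +∞ otherwise. In particular the risk envelope of R^ε is {p : Φ(p) ≤ ε, E[p] = 1, p ≥ 0}. -/

import Mathlib

open MeasureTheory

/-!
Writing `X = λ • Y`, the conjugate of `R^ε` becomes `sup_{λ>0} sup_Y λ (⟨p,Y⟩ - R Y - ε)`, and the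
inner supremum is `λ (R*(p) - ε)` because `x ↦ λ (x - ε)` is monotone and continuous on `EReal`.
Since `R*(p) > -∞`, the supremum over `λ` is `0` or `+∞` according to the sign of `R*(p) - ε`.
For the envelope, `R*(p) = +∞` off `{⟨p,1⟩ = 1}` by assumption, and also when `p ≥ 0` fails,
because `R` is monotone.
-/

/-- The constant function `1` as an element of `L²(μ)`. -/
noncomputable def oneLp {Θ : Type*} [MeasurableSpace Θ] (μ : Measure Θ)
    [IsFiniteMeasure μ] : Lp ℝ 2 μ :=
  MemLp.toLp (fun _ => (1 : ℝ)) (memLp_const 1)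

/-- The Fenchel conjugate `R*` of a real-valued functional on `L²(μ)`,
with pairing `⟨p,X⟩ = E[pX]`. -/
noncomputable def rStar {Θ : Type*} [MeasurableSpace Θ] (μ : Measure Θ)
    (R : Lp ℝ 2 μ → ℝ) (p : Lp ℝ 2 μ) : EReal :=
  ⨆ X : Lp ℝ 2 μ, ((∫ θ, p θ * X θ ∂μ - R X : ℝ) : EReal)

/-- `R^ε(X) = inf_{λ>0}(λε + λ R(X/λ))`. -/
noncomputable def rEps {Θ : Type*} [MeasurableSpace Θ] (μ : Measure Θ)
    (R : Lp ℝ 2 μ → ℝ) (ε : ℝ) (X : Lp ℝ 2 μ) : EReal :=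
  ⨅ l : {l : ℝ // 0 < l}, (((l : ℝ) * ε + (l : ℝ) * R (((l : ℝ))⁻¹ • X) : ℝ) : EReal)

/-- The Fenchel conjugate of `R^ε`. -/
noncomputable def rEpsStar {Θ : Type*} [MeasurableSpace Θ] (μ : Measure Θ)
    (R : Lp ℝ 2 μ → ℝ) (ε : ℝ) (p : Lp ℝ 2 μ) : EReal :=
  ⨆ X : Lp ℝ 2 μ, (((∫ θ, p θ * X θ ∂μ : ℝ) : EReal) - rEps μ R ε X)

namespace EReal

lemma coe_sub_iInf {ι : Sort*} (a : ℝ) (f : ι → EReal) :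
    (a : EReal) - ⨅ i, f i = ⨆ i, ((a : EReal) - f i) := by
  refine Antitone.map_iInf_of_continuousAt (f := fun x : EReal => (a : EReal) - x) ?_
    (fun x y h => EReal.sub_le_sub le_rfl h) (by simp)
  have : ContinuousAt (fun p : EReal × EReal => p.1 + p.2) ((a : EReal), -⨅ i, f i) :=
    EReal.continuousAt_add (Or.inl (coe_ne_top a)) (Or.inl (coe_ne_bot a))
  exact this.comp (f := fun x : EReal => ((a : EReal), -x)) (by fun_prop)

lemma coe_mul_iSup_sub_coe {ι : Sort*} {l : ℝ} (hl : 0 < l) (c : ℝ) (f : ι → EReal) :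
    (l : EReal) * ((⨆ i, f i) - c) = ⨆ i, (l : EReal) * (f i - c) := by
  refine Monotone.map_iSup_of_continuousAt (f := fun x : EReal => (l : EReal) * (x - c)) ?_
    (fun x y h => mul_le_mul_of_nonneg_left (EReal.sub_le_sub h le_rfl) (by exact_mod_cast hl.le))
    (by simp [coe_mul_bot_of_pos hl])
  have hmul : ContinuousAt (fun p : EReal × EReal => p.1 * p.2) ((l : EReal), (⨆ i, f i) - c) :=
    EReal.continuousAt_mul (Or.inl (coe_ne_zero.2 hl.ne')) (Or.inl (coe_ne_zero.2 hl.ne'))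
      (Or.inl (coe_ne_bot l)) (Or.inl (coe_ne_top l))
  have hsub : ContinuousAt (fun p : EReal × EReal => p.1 + p.2) ((⨆ i, f i), ((-c : ℝ) : EReal)) :=
    EReal.continuousAt_add (Or.inr (coe_ne_bot _)) (Or.inr (coe_ne_top _))
  exact hmul.comp (f := fun x : EReal => ((l : EReal), x - c)) <| continuousAt_const.prodMk <|
    hsub.comp (f := fun x : EReal => (x, ((-c : ℝ) : EReal))) (by fun_prop)

lemma iSup_pos_coe_mul_of_nonpos {s : EReal} (hbot : s ≠ ⊥) (hs : s ≤ 0) :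
    ⨆ l : {l : ℝ // 0 < l}, (l : EReal) * s = 0 := by
  lift s to ℝ using ⟨(hs.trans_lt zero_lt_top).ne, hbot⟩
  have hs : s ≤ 0 := by exact_mod_cast hs
  refine le_antisymm (iSup_le fun l => ?_) (ge_of_forall_gt_iff_ge.1 fun z hz => ?_)
  · exact_mod_cast mul_nonpos_of_nonneg_of_nonpos l.2.le hs
  · have hz : z < 0 := by exact_mod_cast hz
    have hl : 0 < z / (s - 1) := div_pos_of_neg_of_neg hz (by linarith)
    refine le_trans ?_ (le_iSup (fun l : {l : ℝ // 0 < l} => (l : EReal) * s) ⟨_, hl⟩)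
    rw [← coe_mul, EReal.coe_le_coe_iff, div_mul_eq_mul_div, le_div_iff_of_neg (by linarith)]
    nlinarith

lemma iSup_pos_coe_mul_of_pos {s : EReal} (hs : 0 < s) :
    ⨆ l : {l : ℝ // 0 < l}, (l : EReal) * s = ⊤ := by
  obtain ⟨r, hr0, hrs⟩ := lt_iff_exists_real_btwn.1 hs
  have hr0 : 0 < r := by exact_mod_cast hr0
  refine (eq_top_iff_forall_lt _).2 fun z => ?_
  have hl : 0 < (|z| + 1) / r := by positivity
  refine lt_of_lt_of_le ?_ (le_iSup (fun l : {l : ℝ // 0 < l} => (l : EReal) * s) ⟨_, hl⟩)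
  refine lt_of_lt_of_le ?_ (mul_le_mul_of_nonneg_left hrs.le (by exact_mod_cast hl.le))
  rw [← coe_mul, EReal.coe_lt_coe_iff]
  simp only [div_mul_cancel₀ _ hr0.ne']
  linarith [le_abs_self z]

end EReal

section Conjugate

open scoped InnerProductSpace

variable {Θ : Type*} [MeasurableSpace Θ] {μ : Measure Θ} (R : Lp ℝ 2 μ → ℝ)

lemma integral_mul_eq_inner (p X : Lp ℝ 2 μ) : ∫ θ, p θ * X θ ∂μ = ⟪p, X⟫_ℝ := by
  rw [real_inner_comm, L2.inner_def]
  rfl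

lemma le_rStar (p X : Lp ℝ 2 μ) : ((⟪p, X⟫_ℝ - R X : ℝ) : EReal) ≤ rStar μ R p := by
  rw [← integral_mul_eq_inner]
  exact le_iSup (fun X : Lp ℝ 2 μ => ((∫ θ, p θ * X θ ∂μ - R X : ℝ) : EReal)) X

lemma rStar_ne_bot (p : Lp ℝ 2 μ) : rStar μ R p ≠ ⊥ :=
  ne_bot_of_le_ne_bot (EReal.coe_ne_bot _) (le_rStar R p 0)

/-- Test against `n • (p ⊓ 0)`: the pairing is `n ‖p ⊓ 0‖²`, while monotonicity keeps the risk
below `R 0`. -/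
lemma rStar_eq_top_of_not_nonneg {R} (hR : Monotone R) {p : Lp ℝ 2 μ} (hp : ¬ 0 ≤ p) :
    rStar μ R p = ⊤ := by
  set q := p ⊓ 0
  have hq : q ≠ 0 := fun h => hp (inf_eq_right.1 h)
  have hpq : ⟪p, q⟫_ℝ = ‖q‖ ^ 2 := by
    rw [← real_inner_self_eq_norm_sq, L2.inner_def, L2.inner_def]
    refine integral_congr_ae ?_
    filter_upwards [Lp.coeFn_inf p 0, Lp.coeFn_zero ℝ 2 μ] with θ hθ h0
    have hqθ : q θ = min (p θ) 0 := by rw [hθ, Pi.inf_apply, h0]; rfl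
    rcases le_total (p θ) 0 with h | h <;> simp [hqθ, h, sq]
  refine (EReal.eq_top_iff_forall_lt _).2 fun M => ?_
  obtain ⟨n, hn⟩ := exists_nat_gt ((M + R 0) / ‖q‖ ^ 2)
  have hRn : R (n • q) ≤ R 0 := hR (nsmul_nonpos inf_le_right n)
  refine lt_of_lt_of_le ?_ (le_rStar R p (n • q))
  have hpn : ⟪p, n • q⟫_ℝ = n * ‖q‖ ^ 2 := by
    rw [← Nat.cast_smul_eq_nsmul ℝ, inner_smul_right, hpq]
  rw [EReal.coe_lt_coe_iff, hpn]
  linarith [(div_lt_iff₀ (by positivity : 0 < ‖q‖ ^ 2)).1 hn]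

lemma rEpsStar_eq_iSup (ε : ℝ) (p : Lp ℝ 2 μ) :
    rEpsStar μ R ε p = ⨆ l : {l : ℝ // 0 < l}, (l : EReal) * (rStar μ R p - ε) := by
  have hscale (l : {l : ℝ // 0 < l}) :
      ⨆ X : Lp ℝ 2 μ, (((∫ θ, p θ * X θ ∂μ) - (l * ε + l * R ((l : ℝ)⁻¹ • X)) : ℝ) : EReal)
        = (l : EReal) * (rStar μ R p - ε) := by
    rw [rStar, EReal.coe_mul_iSup_sub_coe l.2, ← (MulAction.surjective₀ l.2.ne').iSup_comp]
    refine iSup_congr fun Y => ?_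
    rw [integral_mul_eq_inner, integral_mul_eq_inner, inner_smul_right, inv_smul_smul₀ l.2.ne',
      ← EReal.coe_sub, ← EReal.coe_mul]
    congr 1
    ring
  simp only [rEpsStar, rEps, EReal.coe_sub_iInf, ← EReal.coe_sub]
  rw [iSup_comm]
  exact iSup_congr hscale

variable {R} {ε : ℝ} {p : Lp ℝ 2 μ}

lemma rEpsStar_eq_zero_of_rStar_le (h : rStar μ R p ≤ ε) : rEpsStar μ R ε p = 0 := by
  rw [rEpsStar_eq_iSup]
  exact EReal.iSup_pos_coe_mul_of_nonpos (EReal.add_ne_bot_iff.2 ⟨rStar_ne_bot R p, by simp⟩)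
    (EReal.sub_nonpos.2 h)

lemma rEpsStar_eq_top_of_lt_rStar (h : ε < rStar μ R p) : rEpsStar μ R ε p = ⊤ := by
  rw [rEpsStar_eq_iSup]
  exact EReal.iSup_pos_coe_mul_of_pos (EReal.sub_pos.2 h)

lemma rEpsStar_ne_top_iff : rEpsStar μ R ε p ≠ ⊤ ↔ rStar μ R p ≤ ε := by
  refine ⟨fun h => not_lt.1 fun hlt => h (rEpsStar_eq_top_of_lt_rStar hlt), fun h => ?_⟩
  simp [rEpsStar_eq_zero_of_rStar_le h]

end Conjugate

theorem rEps_conjugate_and_risk_envelope_general {Θ : Type*} [MeasurableSpace Θ]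
    (μ : Measure Θ)
    (R : Lp ℝ 2 μ → ℝ)
    (hmono : ∀ X Y : Lp ℝ 2 μ, (⇑X ≤ᵐ[μ] ⇑Y) → R X ≤ R Y)
    (Φ : Lp ℝ 2 μ → EReal)
    (hΦ : ∀ p : Lp ℝ 2 μ,
      ((∫ θ, p θ ∂μ = 1) → rStar μ R p = Φ p) ∧
      ((∫ θ, p θ ∂μ ≠ 1) → rStar μ R p = ⊤))
    (ε : ℝ) :
    (∀ p : Lp ℝ 2 μ,
        rEpsStar μ R ε p
          = ⨆ l : {l : ℝ // 0 < l}, (((l : ℝ) : EReal) * (rStar μ R p - (ε : EReal)))) ∧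
    (∀ p : Lp ℝ 2 μ, rStar μ R p ≤ (ε : EReal) → rEpsStar μ R ε p = 0) ∧
    (∀ p : Lp ℝ 2 μ, (ε : EReal) < rStar μ R p → rEpsStar μ R ε p = ⊤) ∧
    ({p : Lp ℝ 2 μ | rEpsStar μ R ε p ≠ ⊤}
      = {p : Lp ℝ 2 μ | Φ p ≤ (ε : EReal) ∧ (∫ θ, p θ ∂μ = 1) ∧
          (fun _ => (0 : ℝ)) ≤ᵐ[μ] ⇑p}) := by
  refine ⟨rEpsStar_eq_iSup R ε, fun p => rEpsStar_eq_zero_of_rStar_le,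
    fun p => rEpsStar_eq_top_of_lt_rStar, ?_⟩
  have hR : Monotone R := fun X Y h => hmono X Y ((Lp.coeFn_le X Y).2 h)
  ext p
  simp only [Set.mem_ofPred_eq, rEpsStar_ne_top_iff]
  constructor
  · intro h
    have hmean : ∫ θ, p θ ∂μ = 1 := by_contra fun hne => by simp [(hΦ p).2 hne] at h
    have hp : 0 ≤ p := by_contra fun hp => by simp [rStar_eq_top_of_not_nonneg hR hp] at h
    exact ⟨(hΦ p).1 hmean ▸ h, hmean, (Lp.coeFn_nonneg p).2 hp⟩
  · rintro ⟨h, hmean, -⟩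
    rwa [(hΦ p).1 hmean]

/-- for a convex (monotone, translation-equivariant) risk measure
`R` whose conjugate equals `Φ` on `{⟨p,1⟩ = 1}` and `+∞` elsewhere, the
conjugate of `R^ε(X) = inf_{λ>0}(λε + λR(X/λ))` is
`(R^ε)*(p) = sup_{λ>0} λ(R*(p) − ε)`; hence it is `0` if `R*(p) ≤ ε` and `+∞`
otherwise, and the risk envelope of `R^ε` is
`{p : Φ(p) ≤ ε, E[p] = 1, p ≥ 0}`. -/
theorem rEps_conjugate_and_risk_envelope {Θ : Type*} [MeasurableSpace Θ]
    (μ : Measure Θ) [IsProbabilityMeasure μ]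
    (R : Lp ℝ 2 μ → ℝ)
    (hconv : ConvexOn ℝ Set.univ R)
    (hmono : ∀ X Y : Lp ℝ 2 μ, (⇑X ≤ᵐ[μ] ⇑Y) → R X ≤ R Y)
    (htrans : ∀ (X : Lp ℝ 2 μ) (c : ℝ), R (X + c • oneLp μ) = R X + c)
    (Φ : Lp ℝ 2 μ → EReal)
    (hΦ : ∀ p : Lp ℝ 2 μ,
      ((∫ θ, p θ ∂μ = 1) → rStar μ R p = Φ p) ∧
      ((∫ θ, p θ ∂μ ≠ 1) → rStar μ R p = ⊤))
    (ε : ℝ) (hε : 0 ≤ ε) :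
    (∀ p : Lp ℝ 2 μ,
        rEpsStar μ R ε p
          = ⨆ l : {l : ℝ // 0 < l}, (((l : ℝ) : EReal) * (rStar μ R p - (ε : EReal)))) ∧
    (∀ p : Lp ℝ 2 μ, rStar μ R p ≤ (ε : EReal) → rEpsStar μ R ε p = 0) ∧
    (∀ p : Lp ℝ 2 μ, (ε : EReal) < rStar μ R p → rEpsStar μ R ε p = ⊤) ∧
    ({p : Lp ℝ 2 μ | rEpsStar μ R ε p ≠ ⊤}
      = {p : Lp ℝ 2 μ | Φ p ≤ (ε : EReal) ∧ (∫ θ, p θ ∂μ = 1) ∧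
          (fun _ => (0 : ℝ)) ≤ᵐ[μ] ⇑p}) :=
  rEps_conjugate_and_risk_envelope_general μ R hmono Φ hΦ ε
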